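/- Let X be a normed space that admits a linear map F onto a subspace V of ℂⁿ (with sup norm) satisfying ‖x‖/α ≤ ‖F(x)‖ ≤ α‖x‖ for some α ≥ 1. Then for all R > r > 0, the ball B_X(0,R) satisfies η_X(B_X(0,R), r) ≤ (4√2·α²·R/r + 2)^{2n}. -/

import Mathlib

/-!
Via `F`, covering `B_X(0, R)` by balls of radius `r` reduces to covering `F(B_X(0, R)) ⊆ B(0, αR)`
by balls of radius `r / (2α)` in `ℂⁿ`: choosing in each ball that meets the image one point of the
image, and pulling it back, loses only the factor `2α` in the radius. In the sup norm, a ball of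
`ℂⁿ` is covered by the product of `n` copies of a square grid in `ℂ`, and a grid of step `δ` in
each real coordinate puts every point within `√2 δ / 2 < δ` of a grid point.
-/

open Metric

theorem Real.exists_finset_grid_abs_sub_le {R δ : ℝ} (hR : 0 ≤ R) (hδ : 0 < δ) :
    ∃ s : Finset ℝ, (s.card : ℝ) ≤ 2 * R / δ + 1 ∧
      ∀ a, |a| < R → ∃ c ∈ s, |a - c| ≤ δ / 2 := by
  classical
  let N := ⌈2 * R / δ⌉₊
  refine ⟨(Finset.range N).image fun k : ℕ => -R + (k + 1 / 2) * δ, ?_, fun a ha => ?_⟩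
  · calc ((Finset.range N).image _).card ≤ (N : ℝ) := by
          exact_mod_cast (Finset.card_image_le.trans (Finset.card_range N).le)
      _ ≤ 2 * R / δ + 1 := (Nat.ceil_lt_add_one (by positivity)).le
  · obtain ⟨haR, haR'⟩ := abs_lt.1 ha
    set t := (a + R) / δ
    have ht : 0 ≤ t := div_nonneg (by linarith) hδ.le
    have htN : t < 2 * R / δ := div_lt_div_of_pos_right (by linarith) hδ
    refine ⟨-R + (⌊t⌋₊ + 1 / 2) * δ, Finset.mem_image_of_mem _ ?_, ?_⟩
    · exact Finset.mem_range.2 ((Nat.floor_lt ht).2 (htN.trans_le (Nat.le_ceil _)))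
    · have h₁ := Nat.floor_le ht
      have h₂ := Nat.lt_floor_add_one t
      have ha : a = -R + t * δ := by linarith [div_mul_cancel₀ (a + R) hδ.ne']
      rw [ha, abs_le]
      constructor <;> nlinarith

theorem Complex.exists_finset_ball_cover {R δ : ℝ} (hR : 0 ≤ R) (hδ : 0 < δ) :
    ∃ s : Finset ℂ, (s.card : ℝ) ≤ (2 * R / δ + 1) ^ 2 ∧
      ball (0 : ℂ) R ⊆ ⋃ c ∈ s, ball c δ := by
  classical
  obtain ⟨g, hg_card, hg⟩ := Real.exists_finset_grid_abs_sub_le hR hδ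
  refine ⟨(g ×ˢ g).image fun p => ⟨p.1, p.2⟩, ?_, fun z hz => ?_⟩
  · calc (((g ×ˢ g).image _).card : ℝ) ≤ (g.card : ℝ) ^ 2 := by
          rw [sq]
          exact_mod_cast Finset.card_image_le.trans (Finset.card_product g g).le
      _ ≤ (2 * R / δ + 1) ^ 2 := by gcongr
  · rw [mem_ball_zero_iff] at hz
    obtain ⟨x, hx, hzx⟩ := hg z.re ((Complex.abs_re_le_norm z).trans_lt hz)
    obtain ⟨y, hy, hzy⟩ := hg z.im ((Complex.abs_im_le_norm z).trans_lt hz)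
    have hxy : (x, y) ∈ g ×ˢ g := Finset.mem_product.2 ⟨hx, hy⟩
    refine Set.mem_biUnion (Finset.mem_image_of_mem _ hxy) ?_
    have hsqrt : √2 < 2 := by
      rw [Real.sqrt_lt' two_pos]; norm_num
    calc dist z ⟨x, y⟩ ≤ √2 * max |z.re - x| |z.im - y| := by
          simpa [dist_eq_norm] using Complex.norm_le_sqrt_two_mul_max (z - ⟨x, y⟩)
      _ ≤ √2 * (δ / 2) := by gcongr; exact max_le hzx hzy
      _ < 2 * (δ / 2) := by gcongr
      _ = δ := by ring

theorem exists_finset_pi_ball_cover {E ι : Type*} [PseudoMetricSpace E] [Fintype ι]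
    {x : E} {R δ : ℝ} (hR : 0 < R) (hδ : 0 < δ) {s : Finset E}
    (hs : ball x R ⊆ ⋃ c ∈ s, ball c δ) :
    ∃ t : Finset (ι → E), t.card = s.card ^ Fintype.card ι ∧
      ball (fun _ => x) R ⊆ ⋃ c ∈ t, ball c δ := by
  classical
  refine ⟨Fintype.piFinset fun _ => s, by simp, fun y hy => ?_⟩
  rw [mem_ball, dist_pi_lt_iff hR] at hy
  have hcov : ∀ i, ∃ c ∈ s, y i ∈ ball c δ := fun i => by
    simpa using hs (mem_ball.2 (hy i))
  choose c hcs hyc using hcov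
  exact Set.mem_biUnion (Fintype.mem_piFinset.2 hcs) ((dist_pi_lt_iff hδ).2 hyc)

theorem AntilipschitzWith.exists_finset_ball_cover_of_image {E F : Type*} [PseudoMetricSpace E]
    [PseudoMetricSpace F] {K : NNReal} {f : E → F} (hf : AntilipschitzWith K f) (hK : 0 < K)
    {A : Set E} {ρ : ℝ} {t : Finset F} (ht : f '' A ⊆ ⋃ c ∈ t, ball c ρ) :
    ∃ s : Finset E, s.card ≤ t.card ∧ A ⊆ ⋃ x ∈ s, ball x (2 * K * ρ) := by
  classical
  let t' := t.filter fun c => ∃ x ∈ A, f x ∈ ball c ρ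
  choose p hpA hpc using fun c : t' => (Finset.mem_filter.1 c.2).2
  refine ⟨Finset.univ.image p, ?_, fun x hx => ?_⟩
  · exact Finset.card_image_le.trans ((Finset.card_univ.trans (Fintype.card_coe t')).trans_le
      (Finset.card_filter_le _ _))
  · obtain ⟨c, hct, hxc⟩ : ∃ c ∈ t, f x ∈ ball c ρ := by simpa using ht ⟨x, hx, rfl⟩
    have hct' : c ∈ t' := Finset.mem_filter.2 ⟨hct, x, hx, hxc⟩
    refine Set.mem_biUnion (Finset.mem_image_of_mem p (Finset.mem_univ ⟨c, hct'⟩)) ?_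
    have hpc' := hpc ⟨c, hct'⟩
    rw [mem_ball] at hxc hpc' ⊢
    calc dist x (p ⟨c, hct'⟩) ≤ K * dist (f x) (f (p ⟨c, hct'⟩)) := hf.le_mul_dist _ _
      _ ≤ K * (dist (f x) c + dist (f (p ⟨c, hct'⟩)) c) := by
          gcongr; exact dist_triangle_right _ _ _
      _ < K * (ρ + ρ) := by gcongr
      _ = 2 * K * ρ := by ring

/-- If a complex normed space `X` admits a linear map `F` into `ℂⁿ` (with the sup norm) that
is `α`-bi-Lipschitz onto its image, then the ball `B_X(0,R)` can be covered by at most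
`(4√2·α²·R/r + 2)^(2n)` balls of radius `r`, for all `R > r > 0`. -/
theorem coveringNumber_ball_of_embedding {X : Type*}
    [NormedAddCommGroup X] [NormedSpace ℂ X] (n : ℕ)
    (F : X →ₗ[ℂ] (Fin n → ℂ)) (α : ℝ) (hα : 1 ≤ α)
    (hbl : ∀ x : X, ‖x‖ / α ≤ ‖F x‖ ∧ ‖F x‖ ≤ α * ‖x‖)
    (R r : ℝ) (hr : 0 < r) (hrR : r < R) :
    ∃ s : Finset X, (s.card : ℝ) ≤ (4 * Real.sqrt 2 * α ^ 2 * R / r + 2) ^ (2 * n) ∧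
      Metric.ball (0 : X) R ⊆ ⋃ x ∈ s, Metric.ball x r := by
  have hα₀ : 0 < α := one_pos.trans_le hα
  have hR : 0 < R := hr.trans hrR
  have hαR : 0 < α * R := by positivity
  have hρ : 0 < r / (2 * α) := by positivity
  obtain ⟨s₁, hs₁_card, hs₁⟩ := Complex.exists_finset_ball_cover hαR.le hρ
  obtain ⟨t, ht_card, ht⟩ := exists_finset_pi_ball_cover (ι := Fin n) hαR hρ hs₁
  have hmaps : F '' ball 0 R ⊆ ball 0 (α * R) := by
    rintro _ ⟨x, hx, rfl⟩
    rw [mem_ball_zero_iff] at hx ⊢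
    exact (hbl x).2.trans_lt (mul_lt_mul_of_pos_left hx hα₀)
  have hF : AntilipschitzWith α.toNNReal F :=
    AddMonoidHomClass.antilipschitz_of_bound F fun x => by
      rw [Real.coe_toNNReal _ hα₀.le, ← div_le_iff₀' hα₀]
      exact (hbl x).1
  obtain ⟨s, hs_card, hs⟩ :=
    hF.exists_finset_ball_cover_of_image (Real.toNNReal_pos.2 hα₀) (hmaps.trans ht)
  refine ⟨s, ?_, ?_⟩
  · have hgrid : 2 * (α * R) / (r / (2 * α)) + 1 ≤ 4 * √2 * α ^ 2 * R / r + 2 := by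
      have hscale : 2 * (α * R) / (r / (2 * α)) = 4 * α ^ 2 * R / r := by field_simp; ring
      have hsqrt : 4 * α ^ 2 * R / r ≤ 4 * √2 * α ^ 2 * R / r := by
        gcongr
        linarith [Real.one_lt_sqrt_two]
      linarith
    have hs_card' : s.card ≤ s₁.card ^ n := by simpa [ht_card] using hs_card
    calc (s.card : ℝ) ≤ (s₁.card : ℝ) ^ n := by exact_mod_cast hs_card'
      _ ≤ ((2 * (α * R) / (r / (2 * α)) + 1) ^ 2) ^ n := by gcongr
      _ ≤ (4 * √2 * α ^ 2 * R / r + 2) ^ (2 * n) := by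
          rw [pow_mul]; gcongr
  · rwa [Real.coe_toNNReal _ hα₀.le, mul_div_cancel₀ _ (by positivity)] at hs
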